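/- (Leitmann's fundamental lemma via Hahn's quantum operator) Let a, b ∈ I with a < b, and let f, f̄ : [a,b]_{q,ω} × ℝ × ℝ → ℝ both satisfy the Lagrangian regularity, with functionals ℒ[y] := ∫_{a}^{b} f(t, y(qt+ω), D_{q,ω}y(t)) d_{q,ω}t and ℒ̄[ȳ] := ∫_{a}^{b} f̄(t, ȳ(qt+ω), D_{q,ω}ȳ(t)) d_{q,ω}t. Let z : [a,b]_{q,ω} × ℝ → ℝ be a transformation with a unique inverse z̄ (i.e., for each t ∈ [a,b]_{q,ω}, ȳ₀ = z̄(t, y₀) if and only if y₀ = z(t, ȳ₀)) inducing a one-to-one correspondence y(t) = z(t, ȳ(t)) between the functions y ∈ 𝔼 with y(a) = α, y(b) = β and the functions ȳ ∈ 𝔼 with ȳ(a) = z̄(a,α), ȳ(b) = z̄(b,β). Suppose there exists G : [a,b]_{q,ω} × ℝ → ℝ such that for every such corresponding pair (y, ȳ), the function t ↦ G(t, ȳ(t)) is continuous at ω₀ and q,ω-differentiable with f(t, y(qt+ω), D_{q,ω}y(t)) − f̄(t, ȳ(qt+ω), D_{q,ω}ȳ(t)) = D_{q,ω}[t ↦ G(t,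 ȳ(t))](t) for all t ∈ [a,b]_{q,ω}. If ȳ* minimizes (resp. maximizes) ℒ̄ over all ȳ ∈ 𝔼 satisfying ȳ(a) = z̄(a,α), ȳ(b) = z̄(b,β), then y*(t) := z(t, ȳ*(t)) minimizes (resp. maximizes) ℒ over all y ∈ 𝔼 satisfying y(a) = α, y(b) = β. -/

import Mathlib

open Filter Topology

noncomputable section

/-- The fixed point `ω₀ := ω/(1-q)` of `t ↦ qt + ω`. -/
def hahnOmega0 (q ω : ℝ) : ℝ := ω / (1 - q)

/-- The Hahn difference operator `D_{q,ω}`: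
`D_{q,ω}f(t) = (f(qt+ω) - f t)/((qt+ω) - t)` for `t ≠ ω₀`, and the ordinary
derivative at `t = ω₀`. -/
def hahnDeriv (q ω : ℝ) (f : ℝ → ℝ) (t : ℝ) : ℝ :=
  if t = hahnOmega0 q ω then deriv f t
  else (f (q * t + ω) - f t) / ((q * t + ω) - t)

/-- `f` is `q,ω`-differentiable at `t` (automatic off `ω₀`; at `ω₀` it means
ordinary (Fréchet) differentiability). -/
def HahnDiffAt (q ω : ℝ) (f : ℝ → ℝ) (t : ℝ) : Prop :=
  t = hahnOmega0 q ω → DifferentiableAt ℝ f t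

/-- The point `x q^k + [k]_{q,ω}` where `[k]_{q,ω} = ω(1-q^k)/(1-q)`. -/
def jnPoint (q ω x : ℝ) (k : ℕ) : ℝ := x * q ^ k + ω * (1 - q ^ k) / (1 - q)

/-- Partial sums of the Jackson–Nörlund series at `x`. -/
def jnPartial (q ω : ℝ) (f : ℝ → ℝ) (x : ℝ) (n : ℕ) : ℝ :=
  ∑ k ∈ Finset.range n, q ^ k * f (jnPoint q ω x k)

/-- Convergence of the Jackson–Nörlund series `Σ q^k f(x q^k + [k]_{q,ω})`. -/
def JNConvergesAt (q ω : ℝ) (f : ℝ → ℝ) (x : ℝ) : Prop :=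
  ∃ S : ℝ, Tendsto (jnPartial q ω f x) atTop (𝓝 S)

/-- The Jackson–Nörlund integral `∫_{ω₀}^{x} f(t) d_{q,ω}t`. -/
def jnSum (q ω : ℝ) (f : ℝ → ℝ) (x : ℝ) : ℝ :=
  (x * (1 - q) - ω) * limUnder atTop (jnPartial q ω f x)

/-- The Jackson–Nörlund integral `∫_{a}^{b} f(t) d_{q,ω}t`. -/
def jnIntegral (q ω : ℝ) (f : ℝ → ℝ) (a b : ℝ) : ℝ :=
  jnSum q ω f b - jnSum q ω f a

/-- The orbit `{q^n s + [n]_{q,ω} : n ∈ ℕ}`. -/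
def qwOrbit (q ω s : ℝ) : Set ℝ := Set.range (jnPoint q ω s)

/-- The orbit together with `ω₀`, i.e. `[s]_{q,ω}`. -/
def qwClosedOrbit (q ω s : ℝ) : Set ℝ := qwOrbit q ω s ∪ {hahnOmega0 q ω}

/-- The `q,ω`-interval `[a,b]_{q,ω}`. -/
def qwInterval (q ω a b : ℝ) : Set ℝ :=
  qwOrbit q ω a ∪ qwOrbit q ω b ∪ {hahnOmega0 q ω}

/-- `g(t,·)` is differentiable at `θ₀`, uniformly in `t ∈ S`, with
partial derivative `g' t = ∂₂g(t,θ₀)`. -/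
def UnifDiffAt (g : ℝ → ℝ → ℝ) (S : Set ℝ) (θ₀ : ℝ) (g' : ℝ → ℝ) : Prop :=
  (∀ t ∈ S, HasDerivAt (g t) (g' t) θ₀) ∧
  ∀ ε > 0, ∃ δ > 0, ∀ θ : ℝ, 0 < |θ - θ₀| → |θ - θ₀| < δ →
    ∀ t ∈ S, |(g t θ - g t θ₀) / (θ - θ₀) - g' t| < ε

/-- Partial derivative of a Lagrangian `f(t,u,v)` in its second argument. -/
def pd2 (f : ℝ → ℝ → ℝ → ℝ) (t u v : ℝ) : ℝ := deriv (fun z => f t z v) u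

/-- Partial derivative of a Lagrangian `f(t,u,v)` in its third argument. -/
def pd3 (f : ℝ → ℝ → ℝ → ℝ) (t u v : ℝ) : ℝ := deriv (fun z => f t u z) v

/-- The integrand `t ↦ f(t, y(qt+ω), D_{q,ω}y(t))`. -/
def lagComp (q ω : ℝ) (f : ℝ → ℝ → ℝ → ℝ) (y : ℝ → ℝ) (t : ℝ) : ℝ :=
  f t (y (q * t + ω)) (hahnDeriv q ω y t)

/-- The variational functional `ℒ[y] = ∫_a^b f(t, y(qt+ω), D_{q,ω}y(t)) d_{q,ω}t`. -/
def varFunc (q ω a b : ℝ) (f : ℝ → ℝ → ℝ → ℝ) (y : ℝ → ℝ) : ℝ :=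
  jnIntegral q ω (lagComp q ω f y) a b

/-- Membership in the space `𝔼`: continuous at `ω₀`, `q,ω`-differentiable on `I`,
with `D_{q,ω}y` bounded on `[a,b]_{q,ω}` and continuous at `ω₀`. -/
def VarMemE (q ω : ℝ) (I : Set ℝ) (a b : ℝ) (y : ℝ → ℝ) : Prop :=
  ContinuousAt y (hahnOmega0 q ω) ∧
  (∀ t ∈ I, HahnDiffAt q ω y t) ∧
  (∃ M : ℝ, ∀ t ∈ qwInterval q ω a b, |hahnDeriv q ω y t| ≤ M) ∧
  ContinuousAt (hahnDeriv q ω y) (hahnOmega0 q ω)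

/-- The norm `‖y‖₁ = sup_{[a,b]_{q,ω}} |y| + sup_{[a,b]_{q,ω}} |D_{q,ω}y|`. -/
def varNorm1 (q ω a b : ℝ) (y : ℝ → ℝ) : ℝ :=
  sSup ((fun t => |y t|) '' qwInterval q ω a b) +
    sSup ((fun t => |hahnDeriv q ω y t|) '' qwInterval q ω a b)

/-- Admissible functions: members of `𝔼` with `y(a) = α`, `y(b) = β`. -/
def VarAdmissible (q ω : ℝ) (I : Set ℝ) (a b α β : ℝ) (y : ℝ → ℝ) : Prop :=
  VarMemE q ω I a b y ∧ y a = α ∧ y b = β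

/-- Admissible variations: members of `𝔼` vanishing at `a` and `b`. -/
def VarAdmissibleVar (q ω : ℝ) (I : Set ℝ) (a b : ℝ) (h : ℝ → ℝ) : Prop :=
  VarMemE q ω I a b h ∧ h a = 0 ∧ h b = 0

/-- Regularity of the Lagrangian: `(u,v) ↦ f(t,u,v)` is `C¹` for each `t`, and
the compositions with any `y ∈ 𝔼` (of `f`, `∂₂f`, `∂₃f`) are continuous at `ω₀`. -/
def LagrangianRegular (q ω : ℝ) (I : Set ℝ) (a b : ℝ) (f : ℝ → ℝ → ℝ → ℝ) : Prop :=
  (∀ t ∈ qwInterval q ω a b, ContDiff ℝ 1 (fun p : ℝ × ℝ => f t p.1 p.2)) ∧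
  ∀ y : ℝ → ℝ, VarMemE q ω I a b y →
    ContinuousAt (lagComp q ω f y) (hahnOmega0 q ω) ∧
    ContinuousAt (fun t => pd2 f t (y (q * t + ω)) (hahnDeriv q ω y t)) (hahnOmega0 q ω) ∧
    ContinuousAt (fun t => pd3 f t (y (q * t + ω)) (hahnDeriv q ω y t)) (hahnOmega0 q ω)

/-- `g(t,ε) = f(t, y(qt+ω) + ε h(qt+ω), D_{q,ω}y(t) + ε D_{q,ω}h(t))`. -/
def varied (q ω : ℝ) (f : ℝ → ℝ → ℝ → ℝ) (y h : ℝ → ℝ) (t ε : ℝ) : ℝ :=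
  f t (y (q * t + ω) + ε * h (q * t + ω)) (hahnDeriv q ω y t + ε * hahnDeriv q ω h t)

/-- The first-variation integrand
`∂₂f(t, y(qt+ω), D_{q,ω}y t) h(qt+ω) + ∂₃f(t, y(qt+ω), D_{q,ω}y t) D_{q,ω}h t`. -/
def varIntegrand (q ω : ℝ) (f : ℝ → ℝ → ℝ → ℝ) (y h : ℝ → ℝ) (t : ℝ) : ℝ :=
  pd2 f t (y (q * t + ω)) (hahnDeriv q ω y t) * h (q * t + ω) +
    pd3 f t (y (q * t + ω)) (hahnDeriv q ω y t) * hahnDeriv q ω h t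

/-- The standing regularity assumptions for the functional associated to `f`. -/
def StandingAssumptions (q ω : ℝ) (I : Set ℝ) (a b α β : ℝ)
    (f : ℝ → ℝ → ℝ → ℝ) : Prop :=
  ∀ y : ℝ → ℝ, VarAdmissible q ω I a b α β y →
    ∀ h : ℝ → ℝ, VarAdmissibleVar q ω I a b h →
      UnifDiffAt (varied q ω f y h) (qwClosedOrbit q ω a) 0 (varIntegrand q ω f y h) ∧
      UnifDiffAt (varied q ω f y h) (qwClosedOrbit q ω b) 0 (varIntegrand q ω f y h) ∧
      (∃ δ > 0, ∀ ε : ℝ, |ε| < δ →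
        JNConvergesAt q ω (lagComp q ω f (fun s => y s + ε * h s)) a ∧
        JNConvergesAt q ω (lagComp q ω f (fun s => y s + ε * h s)) b) ∧
      JNConvergesAt q ω (varIntegrand q ω f y h) a ∧
      JNConvergesAt q ω (varIntegrand q ω f y h) b

/-- The Hahn quantum Euler–Lagrange equation for `f` along `y` on `[a,b]_{q,ω}`. -/
def EulerLagrange (q ω a b : ℝ) (f : ℝ → ℝ → ℝ → ℝ) (y : ℝ → ℝ) : Prop :=
  ∀ t ∈ qwInterval q ω a b,
    hahnDeriv q ω (fun s => pd3 f s (y (q * s + ω)) (hahnDeriv q ω y s)) t =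
      pd2 f t (y (q * t + ω)) (hahnDeriv q ω y t)

/-!
Both functionals are Jackson–Nörlund sums along the orbits `q^k x + [k]_{q,ω}` of `a` and `b`,
which converge to `ω₀`. Along an orbit the Hahn derivative is a difference quotient, so the sum
of `D_{q,ω}F` telescopes to `F x - F ω₀`; hence `ℒ[z(·, ȳ)] = ℒ̄[ȳ] + G(b, ȳ(b)) - G(a, ȳ(a))`,
and the boundary term is the same for every admissible `ȳ`. Conversely every admissible `y`
agrees on `[a,b]_{q,ω}` with `z(·, z̄(·, y))`, and off `ω₀` the integrand only sees values on
the orbit, so `ℒ[y] = ℒ[z(·, z̄(·, y))]`. Optimality of `ȳ*` therefore transfers to `z(·, ȳ*)`.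
-/

section JacksonNorlund

variable {q ω : ℝ}

lemma jnPoint_eq_pow_mul_add (hq : q ≠ 1) (x : ℝ) (k : ℕ) :
    jnPoint q ω x k = q ^ k * (x - hahnOmega0 q ω) + hahnOmega0 q ω := by
  have : 1 - q ≠ 0 := sub_ne_zero.2 hq.symm
  unfold jnPoint hahnOmega0
  field_simp
  ring

lemma jnPoint_zero (x : ℝ) : jnPoint q ω x 0 = x := by
  simp [jnPoint]

lemma jnPoint_succ (hq : q ≠ 1) (x : ℝ) (k : ℕ) :
    jnPoint q ω x (k + 1) = q * jnPoint q ω x k + ω := by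
  have : 1 - q ≠ 0 := sub_ne_zero.2 hq.symm
  unfold jnPoint
  field_simp
  ring

lemma jnPoint_ne_hahnOmega0 (hq0 : q ≠ 0) (hq1 : q ≠ 1) {x : ℝ} (hx : x ≠ hahnOmega0 q ω)
    (k : ℕ) : jnPoint q ω x k ≠ hahnOmega0 q ω := by
  rw [jnPoint_eq_pow_mul_add hq1, Ne, add_eq_right, mul_eq_zero, sub_eq_zero, not_or]
  exact ⟨pow_ne_zero k hq0, hx⟩

lemma tendsto_jnPoint (hq : |q| < 1) (x : ℝ) :
    Tendsto (jnPoint q ω x) atTop (𝓝 (hahnOmega0 q ω)) := by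
  have hq1 : q ≠ 1 := fun h => by simp [h] at hq
  have h := ((tendsto_pow_atTop_nhds_zero_of_abs_lt_one hq).mul_const
    (x - hahnOmega0 q ω)).add_const (hahnOmega0 q ω)
  rw [zero_mul, zero_add] at h
  rwa [show jnPoint q ω x = _ from funext (jnPoint_eq_pow_mul_add hq1 x)]

lemma jnSum_hahnOmega0 (hq : q ≠ 1) (g : ℝ → ℝ) : jnSum q ω g (hahnOmega0 q ω) = 0 := by
  have : 1 - q ≠ 0 := sub_ne_zero.2 hq.symm
  have hfactor : hahnOmega0 q ω * (1 - q) - ω = 0 := by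
    unfold hahnOmega0
    field_simp
    ring
  rw [jnSum, hfactor, zero_mul]

lemma jnSum_congr {x : ℝ} {g h : ℝ → ℝ} (hgh : Set.EqOn g h (qwOrbit q ω x)) :
    jnSum q ω g x = jnSum q ω h x := by
  have : jnPartial q ω g x = jnPartial q ω h x := by
    funext n
    exact Finset.sum_congr rfl fun k _ => by rw [hgh (Set.mem_range_self k)]
  rw [jnSum, jnSum, this]

lemma jnSum_sub {x : ℝ} {g h : ℝ → ℝ} (hg : JNConvergesAt q ω g x)
    (hh : JNConvergesAt q ω h x) :
    jnSum q ω (fun t => g t - h t) x = jnSum q ω g x - jnSum q ω h x := by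
  obtain ⟨S, hS⟩ := hg
  obtain ⟨T, hT⟩ := hh
  have hpartial : jnPartial q ω (fun t => g t - h t) x =
      fun n => jnPartial q ω g x n - jnPartial q ω h x n := by
    funext n
    simp only [jnPartial, mul_sub, Finset.sum_sub_distrib]
  rw [jnSum, jnSum, jnSum, hpartial, (hS.sub hT).limUnder_eq, hS.limUnder_eq,
    hT.limUnder_eq, mul_sub]

/-- Along the orbit of `x` the Hahn derivative is a difference quotient whose denominator
`jnPoint x (k+1) - jnPoint x k = q^k (q - 1)(x - ω₀)` cancels the weight `q^k`. -/
lemma pow_mul_hahnDeriv_jnPoint (hq0 : q ≠ 0) (hq1 : q ≠ 1) (F : ℝ → ℝ) {x : ℝ}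
    (hx : x ≠ hahnOmega0 q ω) (k : ℕ) :
    q ^ k * hahnDeriv q ω F (jnPoint q ω x k) =
      (F (jnPoint q ω x (k + 1)) - F (jnPoint q ω x k)) / ((q - 1) * (x - hahnOmega0 q ω)) := by
  have hstep : jnPoint q ω x (k + 1) - jnPoint q ω x k =
      q ^ k * ((q - 1) * (x - hahnOmega0 q ω)) := by
    rw [jnPoint_eq_pow_mul_add hq1, jnPoint_eq_pow_mul_add hq1]
    ring
  have hc : (q - 1) * (x - hahnOmega0 q ω) ≠ 0 :=
    mul_ne_zero (sub_ne_zero.2 hq1) (sub_ne_zero.2 hx)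
  have hqk : q ^ k ≠ 0 := pow_ne_zero k hq0
  rw [hahnDeriv, if_neg (jnPoint_ne_hahnOmega0 hq0 hq1 hx k), ← jnPoint_succ hq1, hstep]
  field_simp

lemma jnSum_hahnDeriv (hq0 : q ≠ 0) (hq : |q| < 1) {F : ℝ → ℝ}
    (hF : ContinuousAt F (hahnOmega0 q ω)) (x : ℝ) :
    jnSum q ω (hahnDeriv q ω F) x = F x - F (hahnOmega0 q ω) := by
  have hq1 : q ≠ 1 := fun h => by simp [h] at hq
  rcases eq_or_ne x (hahnOmega0 q ω) with rfl | hx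
  · rw [jnSum_hahnOmega0 hq1, sub_self]
  set c := (q - 1) * (x - hahnOmega0 q ω)
  have hc : c ≠ 0 := mul_ne_zero (sub_ne_zero.2 hq1) (sub_ne_zero.2 hx)
  have htelescope : jnPartial q ω (hahnDeriv q ω F) x =
      fun n => (F (jnPoint q ω x n) - F x) / c := by
    funext n
    rw [jnPartial, Finset.sum_congr rfl fun k _ => pow_mul_hahnDeriv_jnPoint hq0 hq1 F hx k,
      ← Finset.sum_div, Finset.sum_range_sub (fun k => F (jnPoint q ω x k)), jnPoint_zero]
  have hlim : Tendsto (jnPartial q ω (hahnDeriv q ω F) x) atTop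
      (𝓝 ((F (hahnOmega0 q ω) - F x) / c)) := by
    rw [htelescope]
    exact ((hF.tendsto.comp (tendsto_jnPoint hq x)).sub_const _).div_const c
  have hfactor : x * (1 - q) - ω = -c := by
    have : 1 - q ≠ 0 := sub_ne_zero.2 hq1.symm
    simp only [c, hahnOmega0]
    field_simp
    ring
  rw [jnSum, hlim.limUnder_eq, hfactor]
  field_simp
  ring

end JacksonNorlund

section Functional

variable {q ω a b : ℝ}

/-- At `ω₀` the Hahn derivative is `deriv`, which sees more of `y` than the orbit: hence `x ≠ ω₀`. -/
lemma lagComp_eqOn_qwOrbit (hq0 : q ≠ 0) (hq1 : q ≠ 1) (f : ℝ → ℝ → ℝ → ℝ) {x : ℝ}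
    (hx : x ≠ hahnOmega0 q ω) {y₁ y₂ : ℝ → ℝ} (hy : Set.EqOn y₁ y₂ (qwOrbit q ω x)) :
    Set.EqOn (lagComp q ω f y₁) (lagComp q ω f y₂) (qwOrbit q ω x) := by
  rintro _ ⟨k, rfl⟩
  have hy' : ∀ j, y₁ (jnPoint q ω x j) = y₂ (jnPoint q ω x j) :=
    fun j => hy (Set.mem_range_self j)
  rw [lagComp, lagComp, hahnDeriv, hahnDeriv, if_neg (jnPoint_ne_hahnOmega0 hq0 hq1 hx k),
    if_neg (jnPoint_ne_hahnOmega0 hq0 hq1 hx k), ← jnPoint_succ hq1, hy' k, hy' (k + 1)]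

lemma jnSum_lagComp_congr (hq0 : q ≠ 0) (hq1 : q ≠ 1) (f : ℝ → ℝ → ℝ → ℝ) {x : ℝ}
    {y₁ y₂ : ℝ → ℝ} (hy : Set.EqOn y₁ y₂ (qwOrbit q ω x)) :
    jnSum q ω (lagComp q ω f y₁) x = jnSum q ω (lagComp q ω f y₂) x := by
  rcases eq_or_ne x (hahnOmega0 q ω) with rfl | hx
  · rw [jnSum_hahnOmega0 hq1, jnSum_hahnOmega0 hq1]
  · exact jnSum_congr (lagComp_eqOn_qwOrbit hq0 hq1 f hx hy)

lemma qwOrbit_left_subset_qwInterval : qwOrbit q ω a ⊆ qwInterval q ω a b :=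
  fun _ h => Or.inl (Or.inl h)

lemma qwOrbit_right_subset_qwInterval : qwOrbit q ω b ⊆ qwInterval q ω a b :=
  fun _ h => Or.inl (Or.inr h)

lemma varFunc_congr (hq0 : q ≠ 0) (hq1 : q ≠ 1) (f : ℝ → ℝ → ℝ → ℝ) {y₁ y₂ : ℝ → ℝ}
    (hy : Set.EqOn y₁ y₂ (qwInterval q ω a b)) :
    varFunc q ω a b f y₁ = varFunc q ω a b f y₂ := by
  rw [varFunc, varFunc, jnIntegral, jnIntegral,
    jnSum_lagComp_congr hq0 hq1 f (hy.mono qwOrbit_left_subset_qwInterval),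
    jnSum_lagComp_congr hq0 hq1 f (hy.mono qwOrbit_right_subset_qwInterval)]

lemma jnIntegral_eq_add_of_sub_eq_hahnDeriv (hq0 : q ≠ 0) (hq : |q| < 1) {g h F : ℝ → ℝ}
    (hga : JNConvergesAt q ω g a) (hgb : JNConvergesAt q ω g b)
    (hha : JNConvergesAt q ω h a) (hhb : JNConvergesAt q ω h b)
    (hF : ContinuousAt F (hahnOmega0 q ω))
    (hgh : Set.EqOn (fun t => g t - h t) (hahnDeriv q ω F) (qwInterval q ω a b)) :
    jnIntegral q ω g a b = jnIntegral q ω h a b + (F b - F a) := by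
  have hsum : ∀ {x}, JNConvergesAt q ω g x → JNConvergesAt q ω h x →
      qwOrbit q ω x ⊆ qwInterval q ω a b →
      jnSum q ω g x - jnSum q ω h x = F x - F (hahnOmega0 q ω) := fun hgx hhx hsub => by
    rw [← jnSum_sub hgx hhx, jnSum_congr (hgh.mono hsub), jnSum_hahnDeriv hq0 hq hF]
  have ha := hsum hga hha qwOrbit_left_subset_qwInterval
  have hb := hsum hgb hhb qwOrbit_right_subset_qwInterval
  rw [jnIntegral, jnIntegral]
  linarith

end Functional

theorem hahn_leitmann_fundamental_lemma_general (q ω : ℝ) (hq0 : 0 < q) (hq1 : q < 1)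
    (I : Set ℝ)
    (a b : ℝ) (α β : ℝ)
    (f fbar : ℝ → ℝ → ℝ → ℝ)
    (z zbar : ℝ → ℝ → ℝ)
    (hinv : ∀ t ∈ qwInterval q ω a b, ∀ y₀ ybar₀ : ℝ,
        ybar₀ = zbar t y₀ ↔ y₀ = z t ybar₀)
    (hcorr₁ : ∀ y : ℝ → ℝ, VarAdmissible q ω I a b α β y →
        VarAdmissible q ω I a b (zbar a α) (zbar b β) (fun t => zbar t (y t)))
    (hcorr₂ : ∀ ybar : ℝ → ℝ, VarAdmissible q ω I a b (zbar a α) (zbar b β) ybar →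
        VarAdmissible q ω I a b α β (fun t => z t (ybar t)))
    (hintf : ∀ y : ℝ → ℝ, VarAdmissible q ω I a b α β y →
        JNConvergesAt q ω (lagComp q ω f y) a ∧
        JNConvergesAt q ω (lagComp q ω f y) b)
    (hintfbar : ∀ ybar : ℝ → ℝ, VarAdmissible q ω I a b (zbar a α) (zbar b β) ybar →
        JNConvergesAt q ω (lagComp q ω fbar ybar) a ∧
        JNConvergesAt q ω (lagComp q ω fbar ybar) b)
    (G : ℝ → ℝ → ℝ)
    (hG : ∀ ybar : ℝ → ℝ, VarAdmissible q ω I a b (zbar a α) (zbar b β) ybar →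
        ContinuousAt (fun t => G t (ybar t)) (hahnOmega0 q ω) ∧
        (∀ t ∈ I, HahnDiffAt q ω (fun s => G s (ybar s)) t) ∧
        ∀ t ∈ qwInterval q ω a b,
          lagComp q ω f (fun s => z s (ybar s)) t - lagComp q ω fbar ybar t =
            hahnDeriv q ω (fun s => G s (ybar s)) t)
    (ybarstar : ℝ → ℝ)
    (hstar : VarAdmissible q ω I a b (zbar a α) (zbar b β) ybarstar) :
    ((∀ ybar : ℝ → ℝ, VarAdmissible q ω I a b (zbar a α) (zbar b β) ybar →
        varFunc q ω a b fbar ybarstar ≤ varFunc q ω a b fbar ybar) →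
      ∀ y : ℝ → ℝ, VarAdmissible q ω I a b α β y →
        varFunc q ω a b f (fun t => z t (ybarstar t)) ≤ varFunc q ω a b f y) ∧
    ((∀ ybar : ℝ → ℝ, VarAdmissible q ω I a b (zbar a α) (zbar b β) ybar →
        varFunc q ω a b fbar ybar ≤ varFunc q ω a b fbar ybarstar) →
      ∀ y : ℝ → ℝ, VarAdmissible q ω I a b α β y →
        varFunc q ω a b f y ≤ varFunc q ω a b f (fun t => z t (ybarstar t))) := by
  have hq : |q| < 1 := by rwa [abs_of_pos hq0]
  have hshift : ∀ ybar, VarAdmissible q ω I a b (zbar a α) (zbar b β) ybar →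
      varFunc q ω a b f (fun t => z t (ybar t)) =
        varFunc q ω a b fbar ybar + (G b (zbar b β) - G a (zbar a α)) := by
    intro ybar hybar
    obtain ⟨hGcont, -, hgauge⟩ := hG ybar hybar
    obtain ⟨hfa, hfb⟩ := hintf _ (hcorr₂ ybar hybar)
    obtain ⟨hfbara, hfbarb⟩ := hintfbar ybar hybar
    rw [varFunc, varFunc,
      jnIntegral_eq_add_of_sub_eq_hahnDeriv hq0.ne' hq hfa hfb hfbara hfbarb hGcont hgauge,
      hybar.2.1, hybar.2.2]
  have hround : ∀ y, varFunc q ω a b f y = varFunc q ω a b f (fun t => z t (zbar t (y t))) :=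
    fun y => varFunc_congr hq0.ne' hq1.ne f fun t ht => (hinv t ht (y t) _).1 rfl
  refine ⟨fun hmin y hy => ?_, fun hmax y hy => ?_⟩
  · rw [hround y, hshift _ (hcorr₁ y hy), hshift _ hstar]
    linarith [hmin _ (hcorr₁ y hy)]
  · rw [hround y, hshift _ (hcorr₁ y hy), hshift _ hstar]
    linarith [hmax _ (hcorr₁ y hy)]

/-- Leitmann's fundamental lemma via Hahn's quantum operator. -/
theorem hahn_leitmann_fundamental_lemma (q ω : ℝ) (hq0 : 0 < q) (hq1 : q < 1)
    (hω : 0 < ω) (I : Set ℝ) (hI : I.OrdConnected) (hmem : hahnOmega0 q ω ∈ I)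
    (a b : ℝ) (ha : a ∈ I) (hb : b ∈ I) (hab : a < b) (α β : ℝ)
    (f fbar : ℝ → ℝ → ℝ → ℝ)
    (hregf : LagrangianRegular q ω I a b f)
    (hregfbar : LagrangianRegular q ω I a b fbar)
    (z zbar : ℝ → ℝ → ℝ)
    (hinv : ∀ t ∈ qwInterval q ω a b, ∀ y₀ ybar₀ : ℝ,
        ybar₀ = zbar t y₀ ↔ y₀ = z t ybar₀)
    (hcorr₁ : ∀ y : ℝ → ℝ, VarAdmissible q ω I a b α β y →
        VarAdmissible q ω I a b (zbar a α) (zbar b β) (fun t => zbar t (y t)))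
    (hcorr₂ : ∀ ybar : ℝ → ℝ, VarAdmissible q ω I a b (zbar a α) (zbar b β) ybar →
        VarAdmissible q ω I a b α β (fun t => z t (ybar t)))
    (hintf : ∀ y : ℝ → ℝ, VarAdmissible q ω I a b α β y →
        JNConvergesAt q ω (lagComp q ω f y) a ∧
        JNConvergesAt q ω (lagComp q ω f y) b)
    (hintfbar : ∀ ybar : ℝ → ℝ, VarAdmissible q ω I a b (zbar a α) (zbar b β) ybar →
        JNConvergesAt q ω (lagComp q ω fbar ybar) a ∧
        JNConvergesAt q ω (lagComp q ω fbar ybar) b)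
    (G : ℝ → ℝ → ℝ)
    (hG : ∀ ybar : ℝ → ℝ, VarAdmissible q ω I a b (zbar a α) (zbar b β) ybar →
        ContinuousAt (fun t => G t (ybar t)) (hahnOmega0 q ω) ∧
        (∀ t ∈ I, HahnDiffAt q ω (fun s => G s (ybar s)) t) ∧
        ∀ t ∈ qwInterval q ω a b,
          lagComp q ω f (fun s => z s (ybar s)) t - lagComp q ω fbar ybar t =
            hahnDeriv q ω (fun s => G s (ybar s)) t)
    (ybarstar : ℝ → ℝ)
    (hstar : VarAdmissible q ω I a b (zbar a α) (zbar b β) ybarstar) :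
    ((∀ ybar : ℝ → ℝ, VarAdmissible q ω I a b (zbar a α) (zbar b β) ybar →
        varFunc q ω a b fbar ybarstar ≤ varFunc q ω a b fbar ybar) →
      ∀ y : ℝ → ℝ, VarAdmissible q ω I a b α β y →
        varFunc q ω a b f (fun t => z t (ybarstar t)) ≤ varFunc q ω a b f y) ∧
    ((∀ ybar : ℝ → ℝ, VarAdmissible q ω I a b (zbar a α) (zbar b β) ybar →
        varFunc q ω a b fbar ybar ≤ varFunc q ω a b fbar ybarstar) →
      ∀ y : ℝ → ℝ, VarAdmissible q ω I a b α β y →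
        varFunc q ω a b f y ≤ varFunc q ω a b f (fun t => z t (ybarstar t))) :=
  hahn_leitmann_fundamental_lemma_general q ω hq0 hq1 I a b α β f fbar z zbar hinv hcorr₁ hcorr₂
    hintf hintfbar G hG ybarstar hstar
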